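/- For all 0 < y < 1, all ξ = (ξ₁,ξ₂) ∈ ℝ², all L ≥ 1, and every integer n with |n| ≤ L: (1/2)·b_{ξ,L}(y) ≤ b_{ξ',L}(y) ≤ 2·b_{ξ,L}(y), where ξ' := (ξ₁, nξ₁ + ξ₂) (i.e. ξ' = ξ·U^n, the image of the row vector ξ under right multiplication by the matrix [[1,n],[0,1]]). -/
import Mathlib


open Real
open scoped ENNReal

noncomputable section

/-- `⟨x⟩`, the distance from `x` to the nearest integer. -/
def nint (x : ℝ) : ℝ := |x - (round x : ℝ)|

/-- The majorant `b_{ξ,L}(y)`, computed in `[0,∞]` with the convention `a/0 = ∞`. -/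
def bMajE (ξ : Fin 2 → ℝ) (L y : ℝ) : ℝ≥0∞ :=
  ⨆ q : ℕ+, min (min (ENNReal.ofReal (1 / ((q : ℕ) : ℝ) ^ 2))
      (ENNReal.ofReal (Real.sqrt y) /
        ENNReal.ofReal (L * ((q : ℕ) : ℝ) * nint (((q : ℕ) : ℝ) * ξ 0))))
    (ENNReal.ofReal (Real.sqrt y) /
      ENNReal.ofReal (((q : ℕ) : ℝ) * nint (((q : ℕ) : ℝ) * ξ 1)))

/-- The majorant `b_{ξ,L}(y)` as a real number (it is always `≤ 1`). -/
def bMaj (ξ : Fin 2 → ℝ) (L y : ℝ) : ℝ := (bMajE ξ L y).toReal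

lemma nint_nonneg (x : ℝ) : 0 ≤ nint x := abs_nonneg _

lemma nint_le_abs_sub_int (x : ℝ) (k : ℤ) : nint x ≤ |x - (k : ℝ)| := round_le x k

lemma nint_add_le (a b : ℝ) : nint (a + b) ≤ nint a + nint b := by
  calc nint (a + b) ≤ |a + b - ((round a + round b : ℤ) : ℝ)| :=
        nint_le_abs_sub_int _ _
    _ ≤ nint a + nint b := by
        push_cast
        have : a + b - ((round a : ℝ) + (round b : ℝ))
            = (a - round a) + (b - round b) := by ring
        rw [this]
        exact abs_add_le _ _

lemma nint_int_mul_le (n : ℤ) (x : ℝ) : nint ((n : ℝ) * x) ≤ |(n : ℝ)| * nint x := by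
  calc nint ((n : ℝ) * x) ≤ |(n : ℝ) * x - ((n * round x : ℤ) : ℝ)| :=
        nint_le_abs_sub_int _ _
    _ = |(n : ℝ)| * nint x := by
        push_cast
        rw [show (n : ℝ) * x - (n : ℝ) * (round x : ℝ) = (n : ℝ) * (x - round x) by ring,
          abs_mul]
        rfl

/-- If `d ≤ b + c`, then `(1/2) * min (s/b) (s/c) ≤ s/d` in `ℝ≥0∞`. -/
lemma half_min_div_le {s b c d : ℝ} (hs : 0 < s) (hb : 0 ≤ b) (hc : 0 ≤ c)
    (hd : d ≤ b + c) :
    (1 / 2 : ℝ≥0∞) * min (ENNReal.ofReal s / ENNReal.ofReal b)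
      (ENNReal.ofReal s / ENNReal.ofReal c) ≤ ENNReal.ofReal s / ENNReal.ofReal d := by
  rcases le_or_gt d 0 with hd0 | hd0
  · have : ENNReal.ofReal d = 0 := ENNReal.ofReal_eq_zero.2 hd0
    rw [this, ENNReal.div_zero ((ENNReal.ofReal_pos.mpr hs).ne')]
    exact le_top
  · -- let m be the max of b, c; then m ≥ d/2 > 0
    have hm : d / 2 ≤ max b c := by
      rcases le_total b c with h | h
      · simp only [max_eq_right h]; linarith [max_eq_right h ▸ hd]
      · simp only [max_eq_left h]; linarith
    have hmpos : 0 < max b c := lt_of_lt_of_le (by linarith) hm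
    have hmin : min (ENNReal.ofReal s / ENNReal.ofReal b)
        (ENNReal.ofReal s / ENNReal.ofReal c)
        ≤ ENNReal.ofReal s / ENNReal.ofReal (max b c) := by
      rcases le_total b c with h | h
      · rw [max_eq_right h]
        exact min_le_right _ _
      · rw [max_eq_left h]
        exact min_le_left _ _
    calc (1 / 2 : ℝ≥0∞) * min (ENNReal.ofReal s / ENNReal.ofReal b)
          (ENNReal.ofReal s / ENNReal.ofReal c)
        ≤ (1 / 2 : ℝ≥0∞) * (ENNReal.ofReal s / ENNReal.ofReal (max b c)) :=
          mul_le_mul_right hmin _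
      _ = ENNReal.ofReal (1 / 2 * (s / max b c)) := by
          rw [← ENNReal.ofReal_div_of_pos hmpos,
            ENNReal.ofReal_mul (by norm_num : (0:ℝ) ≤ 1 / 2)]
          congr 1
          rw [ENNReal.ofReal_div_of_pos (by norm_num : (0:ℝ) < 2), ENNReal.ofReal_one,
            ENNReal.ofReal_ofNat]
      _ ≤ ENNReal.ofReal (s / d) := by
          apply ENNReal.ofReal_le_ofReal
          rw [show (1:ℝ) / 2 * (s / (max b c)) = s / (2 * max b c) by ring,
            div_le_div_iff₀ (by positivity) hd0]
          nlinarith [mul_le_mul_of_nonneg_left (show d ≤ 2 * max b c by linarith) hs.le]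
      _ = ENNReal.ofReal s / ENNReal.ofReal d := ENNReal.ofReal_div_of_pos hd0

/-- Key one-sided estimate. -/
lemma bMajE_half_le (y : ℝ) (hy0 : 0 < y) (ξ₁ ξ₂ L : ℝ) (hL : 1 ≤ L)
    (n : ℤ) (hn : |(n : ℝ)| ≤ L) :
    (1 / 2 : ℝ≥0∞) * bMajE ![ξ₁, ξ₂] L y ≤ bMajE ![ξ₁, (n : ℝ) * ξ₁ + ξ₂] L y := by
  have hs : 0 < Real.sqrt y := Real.sqrt_pos.mpr hy0
  rw [bMajE, bMajE, ENNReal.mul_iSup]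
  apply iSup_mono
  intro q
  simp only [Matrix.cons_val_zero, Matrix.cons_val_one, Matrix.head_cons]
  set Q : ℝ := ((q : ℕ) : ℝ) with hQ
  have hQpos : 0 < Q := by positivity
  set A := ENNReal.ofReal (1 / Q ^ 2)
  set B := ENNReal.ofReal (Real.sqrt y) / ENNReal.ofReal (L * Q * nint (Q * ξ₁))
  set C := ENNReal.ofReal (Real.sqrt y) / ENNReal.ofReal (Q * nint (Q * ξ₂))
  set C' := ENNReal.ofReal (Real.sqrt y) /
    ENNReal.ofReal (Q * nint (Q * ((n : ℝ) * ξ₁ + ξ₂)))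
  have hC' : (1 / 2 : ℝ≥0∞) * min B C ≤ C' := by
    apply half_min_div_le hs
      (mul_nonneg (mul_nonneg (by linarith) hQpos.le) (nint_nonneg _))
      (mul_nonneg hQpos.le (nint_nonneg _))
    have h1 : nint (Q * ((n : ℝ) * ξ₁ + ξ₂)) ≤ |(n : ℝ)| * nint (Q * ξ₁) + nint (Q * ξ₂) := by
      have := nint_add_le ((n : ℝ) * (Q * ξ₁)) (Q * ξ₂)
      have h2 := nint_int_mul_le n (Q * ξ₁)
      calc nint (Q * ((n : ℝ) * ξ₁ + ξ₂))
          = nint ((n : ℝ) * (Q * ξ₁) + Q * ξ₂) := by ring_nf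
        _ ≤ nint ((n : ℝ) * (Q * ξ₁)) + nint (Q * ξ₂) := this
        _ ≤ |(n : ℝ)| * nint (Q * ξ₁) + nint (Q * ξ₂) := by linarith
    calc Q * nint (Q * ((n : ℝ) * ξ₁ + ξ₂))
        ≤ Q * (|(n : ℝ)| * nint (Q * ξ₁) + nint (Q * ξ₂)) := by
          exact mul_le_mul_of_nonneg_left h1 hQpos.le
      _ ≤ L * Q * nint (Q * ξ₁) + Q * nint (Q * ξ₂) := by
          nlinarith [mul_nonneg (mul_nonneg (sub_nonneg.mpr hn) hQpos.le)
            (nint_nonneg (Q * ξ₁)), nint_nonneg (Q * ξ₂), hQpos.le]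
  have hhalf : ∀ x : ℝ≥0∞, (1 / 2 : ℝ≥0∞) * x ≤ x := fun x =>
    mul_le_of_le_one_left' (by norm_num)
  apply le_min
  · exact le_trans (mul_le_mul_right (min_le_left _ _) _) (hhalf _)
  · exact le_trans (mul_le_mul_right (min_le_min (min_le_right _ _) le_rfl) _) hC'

lemma bMajE_le_one (ξ : Fin 2 → ℝ) (L y : ℝ) : bMajE ξ L y ≤ 1 := by
  rw [bMajE]
  apply iSup_le
  intro q
  refine le_trans (le_trans (min_le_left _ _) (min_le_left _ _)) ?_
  rw [← ENNReal.ofReal_one]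
  apply ENNReal.ofReal_le_ofReal
  have hq : (1 : ℝ) ≤ ((q : ℕ) : ℝ) := by exact_mod_cast q.one_le
  rw [div_le_one (by positivity)]
  nlinarith

/-- **Lemma 9.2.** For `0 < y < 1`, `ξ ∈ ℝ²`, `L ≥ 1` and any integer `n` with
`|n| ≤ L`, one has `b_{ξU^n,L}(y) ≍ b_{ξ,L}(y)` within a factor `2`. -/
theorem bMaj_shift_comparison (y : ℝ) (hy0 : 0 < y) (hy1 : y < 1)
    (ξ₁ ξ₂ L : ℝ) (hL : 1 ≤ L) (n : ℤ) (hn : |(n : ℝ)| ≤ L) :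
    (1 / 2) * bMaj ![ξ₁, ξ₂] L y ≤ bMaj ![ξ₁, (n : ℝ) * ξ₁ + ξ₂] L y ∧
      bMaj ![ξ₁, (n : ℝ) * ξ₁ + ξ₂] L y ≤ 2 * bMaj ![ξ₁, ξ₂] L y := by
  have h1 : (1 / 2 : ℝ≥0∞) * bMajE ![ξ₁, ξ₂] L y ≤ bMajE ![ξ₁, (n : ℝ) * ξ₁ + ξ₂] L y :=
    bMajE_half_le y hy0 ξ₁ ξ₂ L hL n hn
  have h2 : (1 / 2 : ℝ≥0∞) * bMajE ![ξ₁, (n : ℝ) * ξ₁ + ξ₂] L y ≤ bMajE ![ξ₁, ξ₂] L y := by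
    have := bMajE_half_le y hy0 ξ₁ ((n : ℝ) * ξ₁ + ξ₂) L hL (-n) (by rwa [Int.cast_neg, abs_neg])
    have heq : (((-n : ℤ) : ℝ) * ξ₁ + ((n : ℝ) * ξ₁ + ξ₂)) = ξ₂ := by push_cast; ring
    rwa [heq] at this
  have hfin1 : bMajE ![ξ₁, ξ₂] L y ≠ ⊤ :=
    (lt_of_le_of_lt (bMajE_le_one _ _ _) ENNReal.one_lt_top).ne
  have hfin2 : bMajE ![ξ₁, (n : ℝ) * ξ₁ + ξ₂] L y ≠ ⊤ :=
    (lt_of_le_of_lt (bMajE_le_one _ _ _) ENNReal.one_lt_top).ne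
  have htr : ((1 / 2 : ℝ≥0∞)).toReal = (1 / 2 : ℝ) := by simp
  constructor
  · have := ENNReal.toReal_mono hfin2 h1
    rw [ENNReal.toReal_mul, htr] at this
    exact this
  · have := ENNReal.toReal_mono hfin1 h2
    rw [ENNReal.toReal_mul, htr] at this
    unfold bMaj
    linarith
end
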